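/- A point of a multiplicatively-weighted roof (with positive weights over a convex region) is covered at most once vertically during strict shrinking: if P(t) = ⋂ᵢ { x : ⟪x, nᵢ⟫ ≥ cᵢ + σᵢ t } with all σᵢ > 0, then for every x ∈ ℝ² the set { t ≥ 0 : x ∈ ∂P(t) ∧ x ∈ P(t) } wherein x lies on the topological boundary of P(t) contains at most one element, provided P(t) has nonempty interior at those times. -/
import Mathlib


open RealInnerProductSpace

theorem boundary_covered_at_most_once
    (m : ℕ) (n : Fin m → EuclideanSpace ℝ (Fin 2)) (c : Fin m → ℝ)
    (σ : Fin m → ℝ)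
    (hn : ∀ i, ‖n i‖ = 1) (hσ : ∀ i, 0 < σ i)
    (P : ℝ → Set (EuclideanSpace ℝ (Fin 2)))
    (hP : ∀ t, P t = ⋂ i, {x | c i + σ i * t ≤ ⟪x, n i⟫}) :
    ∀ x : EuclideanSpace ℝ (Fin 2),
      {t : ℝ | 0 ≤ t ∧ x ∈ P t ∧ x ∈ frontier (P t) ∧
               (interior (P t)).Nonempty}.Subsingleton := by
  intro x
  -- Key: if t₁ < t₂ and x ∈ P t₂, then x ∈ interior (P t₁).
  have key : ∀ t₁ t₂ : ℝ, t₁ < t₂ → x ∈ P t₂ → x ∈ interior (P t₁) := by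
    intro t₁ t₂ hlt hx
    have hopen : IsOpen (⋂ i, {y : EuclideanSpace ℝ (Fin 2) | c i + σ i * t₁ < ⟪y, n i⟫}) := by
      apply isOpen_iInter_of_finite
      intro i
      exact isOpen_lt continuous_const ((continuous_id.inner continuous_const))
    have hsub : (⋂ i, {y : EuclideanSpace ℝ (Fin 2) | c i + σ i * t₁ < ⟪y, n i⟫}) ⊆ P t₁ := by
      rw [hP t₁]
      exact Set.iInter_mono fun i y hy => le_of_lt (Set.mem_setOf_eq ▸ hy)
    have hmem : x ∈ ⋂ i, {y : EuclideanSpace ℝ (Fin 2) | c i + σ i * t₁ < ⟪y, n i⟫} := by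
      rw [hP t₂] at hx
      refine Set.mem_iInter.2 fun i => ?_
      have h2 := Set.mem_iInter.1 hx i
      have : c i + σ i * t₁ < c i + σ i * t₂ := by
        have := mul_lt_mul_of_pos_left hlt (hσ i)
        linarith
      exact lt_of_lt_of_le this h2
    exact interior_maximal hsub hopen hmem
  intro t₁ ht₁ t₂ ht₂
  by_contra hne
  rcases lt_or_gt_of_ne hne with h | h
  · have := key t₁ t₂ h ht₂.2.1
    exact (ht₁.2.2.1).2 this
  · have := key t₂ t₁ h ht₁.2.1
    exact (ht₂.2.2.1).2 this
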